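/- arXiv:1401.2648 — 4 statements merged into one kernel-verified Lean document; each statement's English description precedes it below -/
import Mathlib

section
/- Let n : ℕ and let R be a finite list of words in n generators, and let G be the finitely presented group PresentedGroup S, where S ⊆ FreeGroup (Fin n) is the (finite) set of elements of the free group determined by R. If G is residually finite, then the word problem for this presentation is decidable: the predicate on words w : List (Fin n × Bool) asserting that the image of FreeGroup.mk w under the quotient homomorphism to G equals 1 satisfies ComputablePred. -/
/-!
Triviality of a word is semi-decidable for any finite presentation: `w = 1` in the presented
group iff `w` is freely equal to a product of conjugates of relators and their inverses, and
such products can be enumerated. Under residual finiteness nontriviality is semi-decidable too: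
if `w ≠ 1`, some finite quotient and hence, by Cayley's theorem, some symmetric group `Sym(m)`
separates `w` from `1`; such a homomorphism is given by finitely many permutations on which every
relator evaluates to the identity, which is a checkable finite certificate. A predicate that is
both r.e. and co-r.e. is computable.
-/

/-- The set of relators in the free group determined by a list of words. -/
def relsOf {α : Type} (R : List (List (α × Bool))) : Set (FreeGroup α) :=
  {x | ∃ r ∈ R, x = FreeGroup.mk r}

/-- The element of the presented group represented by a word. -/
def wordElt {α : Type} (R : List (List (α × Bool))) (w : List (α × Bool)) :
    PresentedGroup (relsOf R) :=
  PresentedGroup.mk (relsOf R) (FreeGroup.mk w)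

theorem PrimrecRel.exists_re {α β : Type*} [Primcodable α] [Primcodable β] {P : α → β → Prop}
    (hP : PrimrecRel P) : REPred fun a => ∃ b, P a b := by
  obtain ⟨hdec, hP⟩ := hP
  let _ : DecidableRel P := fun a b => hdec (a, b)
  have hsearch : Primrec₂ fun (a : α) (k : ℕ) =>
      (Encodable.decode k : Option β).elim false fun b => decide (P a b) :=
    (Primrec.option_casesOn (Primrec.decode.comp .snd) (.const false)
      (hP.comp (Primrec.pair (Primrec.fst.comp .fst) .snd)).to₂).of_eq fun ⟨a, k⟩ => by
        dsimp only
        cases Encodable.decode (α := β) k <;> rfl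
  refine (Partrec.rfind hsearch.to_comp.partrec₂).dom_re.of_eq fun a => ?_
  simp only [Nat.rfind_dom, PFun.coe_val, Part.mem_some_iff, Bool.true_eq, Part.some_dom,
    implies_true, and_true]
  constructor
  · rintro ⟨k, hk⟩
    cases h : (Encodable.decode k : Option β) with
    | none => simp [h] at hk
    | some b => exact ⟨b, by simpa [h] using hk⟩
  · rintro ⟨b, hb⟩
    exact ⟨Encodable.encode b, by simpa using hb⟩

namespace FreeGroup

variable {α : Type*} [Primcodable α]

theorem primrec_invRev : Primrec (invRev : List (α × Bool) → List (α × Bool)) :=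
  Primrec.list_reverse.comp <| Primrec.list_map .id <|
    (Primrec.pair (Primrec.fst.comp .snd) (Primrec.not.comp (Primrec.snd.comp .snd))).to₂

theorem primrec_reduce [DecidableEq α] : Primrec (reduce : List (α × Bool) → List (α × Bool)) := by
  have hstep : Primrec₂ fun (x : α × Bool) (L : List (α × Bool)) =>
      (List.casesOn L [x] fun hd tl => if x.1 = hd.1 ∧ x.2 = !hd.2 then tl else x :: hd :: tl :
        List (α × Bool)) := by
    have hcancel : PrimrecRel fun (x : α × Bool) (y : (α × Bool) × List (α × Bool)) =>
        x.1 = y.1.1 ∧ x.2 = !y.1.2 :=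
      (Primrec.eq.comp (Primrec.fst.comp .fst) (Primrec.fst.comp (Primrec.fst.comp .snd))).and
        (Primrec.eq.comp (Primrec.snd.comp .fst)
          (Primrec.not.comp (Primrec.snd.comp (Primrec.fst.comp .snd))))
    exact Primrec.list_casesOn .snd (Primrec.list_cons.comp .fst (.const []))
      (Primrec.ite (hcancel.comp (Primrec.fst.comp .fst) .snd) (Primrec.snd.comp .snd)
        (Primrec.list_cons.comp (Primrec.fst.comp .fst)
          (Primrec.list_cons.comp (Primrec.fst.comp .snd) (Primrec.snd.comp .snd)))).to₂
  -- `reduce` is defined by this very `List.rec`.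
  exact (Primrec.list_rec .id (.const [])
    (hstep.comp (Primrec.fst.comp .snd) (Primrec.snd.comp (Primrec.snd.comp .snd))).to₂).of_eq
    fun L => rfl

theorem primrecRel_mk_eq_mk [DecidableEq α] :
    PrimrecRel fun u v : List (α × Bool) => mk u = mk v :=
  (Primrec.eq.comp₂ (primrec_reduce.comp .fst).to₂ (primrec_reduce.comp .snd).to₂).of_eq
    fun u v => by rw [← toWord_mk, ← toWord_mk, toWord_inj]

end FreeGroup

open FreeGroup Equiv

section Consequences

variable {α : Type} (R : List (List (α × Bool)))

-- `(u, i, s)` encodes `u * r_i ^ (±1) * u⁻¹`, the sign given by `s`; an index outside `R`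
-- stands for the empty relator.
def conjRelatorWord (c : List (α × Bool) × ℕ × Bool) : List (α × Bool) :=
  c.1 ++ (bif c.2.2 then R.getD c.2.1 [] else invRev (R.getD c.2.1 [])) ++ invRev c.1

def consequenceWord (L : List (List (α × Bool) × ℕ × Bool)) : List (α × Bool) :=
  L.flatMap (conjRelatorWord R)

theorem mk_conjRelatorWord (u : List (α × Bool)) (i : ℕ) (s : Bool) :
    mk (conjRelatorWord R (u, i, s)) =
      mk u * (bif s then mk (R.getD i []) else (mk (R.getD i []))⁻¹) * (mk u)⁻¹ := by
  cases s <;> simp [conjRelatorWord, ← mul_mk, inv_mk, mul_assoc]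

theorem mk_consequenceWord (L : List (List (α × Bool) × ℕ × Bool)) :
    mk (consequenceWord R L) = (L.map fun c => mk (conjRelatorWord R c)).prod := by
  induction L with
  | nil => rfl
  | cons c L ih => rw [consequenceWord, List.flatMap_cons, ← mul_mk, ← consequenceWord, ih,
      List.map_cons, List.prod_cons]

theorem mk_getD_mem_normalClosure (i : ℕ) :
    mk (R.getD i []) ∈ Subgroup.normalClosure (relsOf R) := by
  by_cases hi : i < R.length
  · exact Subgroup.subset_normalClosure ⟨R[i], List.getElem_mem hi, by rw [List.getD_eq_getElem]⟩
  · rw [List.getD_eq_default _ _ (not_lt.1 hi), ← one_eq_mk]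
    exact one_mem _

theorem mk_conjRelatorWord_mem_normalClosure (c : List (α × Bool) × ℕ × Bool) :
    mk (conjRelatorWord R c) ∈ Subgroup.normalClosure (relsOf R) := by
  obtain ⟨u, i, s⟩ := c
  have hr := mk_getD_mem_normalClosure R i
  rw [mk_conjRelatorWord]
  refine Subgroup.normalClosure_normal.conj_mem _ ?_ _
  cases s
  · exact inv_mem hr
  · exact hr

theorem conjugatesOfSet_relsOf_subset_range :
    Group.conjugatesOfSet (relsOf R) ∪ (Group.conjugatesOfSet (relsOf R))⁻¹ ⊆
      Set.range fun c => mk (conjRelatorWord R c) := by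
  have hconj : ∀ y ∈ Group.conjugatesOfSet (relsOf R), ∀ s : Bool,
      ∃ c, mk (conjRelatorWord R c) = bif s then y else y⁻¹ := by
    classical
    intro y hy s
    obtain ⟨_, ⟨r, hr, rfl⟩, hconj⟩ := Group.mem_conjugatesOfSet_iff.1 hy
    obtain ⟨g, rfl⟩ := isConj_iff.1 hconj
    obtain ⟨i, hi, rfl⟩ := List.mem_iff_getElem.1 hr
    refine ⟨(g.toWord, i, s), ?_⟩
    rw [mk_conjRelatorWord, mk_toWord, List.getD_eq_getElem _ _ hi]
    cases s <;> simp [mul_assoc]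
  rintro y (hy | hy)
  · exact hconj y hy true
  · simpa using hconj y⁻¹ hy false

theorem mem_normalClosure_relsOf_iff (w : List (α × Bool)) :
    mk w ∈ Subgroup.normalClosure (relsOf R) ↔ ∃ L, mk (consequenceWord R L) = mk w := by
  constructor
  · intro hw
    rw [← Subgroup.mem_toSubmonoid, Subgroup.normalClosure, Subgroup.closure_toSubmonoid] at hw
    obtain ⟨l, hl, hprod⟩ := Submonoid.exists_list_of_mem_closure hw
    have hlift : l ∈ Set.range (List.map fun c => mk (conjRelatorWord R c)) := by
      rw [Set.range_list_map]
      exact fun y hy => conjugatesOfSet_relsOf_subset_range R (hl y hy)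
    obtain ⟨L, rfl⟩ := hlift
    exact ⟨L, by rw [mk_consequenceWord, hprod]⟩
  · rintro ⟨L, hL⟩
    rw [← hL, mk_consequenceWord]
    exact Subgroup.list_prod_mem _ fun y hy => by
      obtain ⟨c, -, rfl⟩ := List.mem_map.1 hy
      exact mk_conjRelatorWord_mem_normalClosure R c

theorem wordElt_eq_one_iff_exists_consequenceWord (w : List (α × Bool)) :
    wordElt R w = 1 ↔ ∃ L, mk (consequenceWord R L) = mk w :=
  PresentedGroup.mk_eq_one_iff.trans (mem_normalClosure_relsOf_iff R w)

theorem primrec_consequenceWord [Primcodable α] :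
    Primrec (consequenceWord R) := by
  have hrel : Primrec fun c : List (α × Bool) × ℕ × Bool => R.getD c.2.1 [] :=
    (Primrec.list_getD []).comp (.const R) (Primrec.fst.comp .snd)
  have hconj : Primrec (conjRelatorWord R) :=
    Primrec.list_append.comp (Primrec.list_append.comp .fst
        (Primrec.cond (Primrec.snd.comp .snd) hrel (primrec_invRev.comp hrel)))
      (primrec_invRev.comp .fst)
  exact Primrec.list_flatMap .id (hconj.comp .snd).to₂

end Consequences

section PermList

variable {m : ℕ}

-- A function on `Fin m` is tabulated as the list of its values in `ℕ`; `compList a b` tabulates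
-- `a ∘ b`.
def compList (a b : List ℕ) : List ℕ :=
  b.map (a.getD · 0)

def permList (σ : Perm (Fin m)) : List ℕ :=
  List.ofFn fun j => (σ j : ℕ)

theorem getD_compList (a : List ℕ) {b : List ℕ} {j : ℕ} (hj : j < b.length) :
    (compList a b).getD j 0 = a.getD (b.getD j 0) 0 := by
  rw [List.getD_eq_getElem _ _ hj, List.getD_eq_getElem _ _ (by simpa [compList] using hj)]
  simp [compList]

theorem permList_eq_iff {σ : Perm (Fin m)} {a : List ℕ} :
    permList σ = a ↔ a.length = m ∧ ∀ j : Fin m, a.getD j 0 = σ j := by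
  constructor
  · rintro rfl
    exact ⟨by simp [permList], fun j => by simp [permList]⟩
  · rintro ⟨hlen, ha⟩
    refine List.ext_getElem (by simp [permList, hlen]) fun j h₁ h₂ => ?_
    have hj : j < m := by simpa [permList] using h₁
    have hσj := ha ⟨j, hj⟩
    rw [List.getD_eq_getElem _ _ h₂] at hσj
    simp [permList, hσj]

theorem getD_permList (σ : Perm (Fin m)) (j : Fin m) : (permList σ).getD j 0 = σ j :=
  (permList_eq_iff.1 rfl).2 j

theorem length_permList (σ : Perm (Fin m)) : (permList σ).length = m :=
  (permList_eq_iff.1 rfl).1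

theorem permList_one : permList (1 : Perm (Fin m)) = List.range m :=
  permList_eq_iff.2 ⟨List.length_range, fun j => by simp⟩

theorem permList_mul (σ τ : Perm (Fin m)) :
    permList (σ * τ) = compList (permList σ) (permList τ) :=
  permList_eq_iff.2 ⟨by simp [compList, length_permList], fun j => by
    rw [getD_compList _ (by simp [length_permList]), getD_permList, getD_permList,
      Perm.mul_apply]⟩

theorem permList_injective : Function.Injective (permList : Perm (Fin m) → List ℕ) :=
  fun σ τ h => Equiv.ext fun j => Fin.ext <| by
    rw [← getD_permList, ← getD_permList, h]

def IsPermPair (m : ℕ) (p : List ℕ × List ℕ) : Prop :=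
  (∀ x ∈ p.1, x < m) ∧ (∀ x ∈ p.2, x < m) ∧
    compList p.1 p.2 = List.range m ∧ compList p.2 p.1 = List.range m

theorem isPermPair_permList (σ : Perm (Fin m)) : IsPermPair m (permList σ, permList σ⁻¹) := by
  refine ⟨fun x hx => ?_, fun x hx => ?_, ?_, ?_⟩
  · obtain ⟨j, rfl⟩ := List.mem_ofFn.1 hx
    exact (σ j).isLt
  · obtain ⟨j, rfl⟩ := List.mem_ofFn.1 hx
    exact (σ⁻¹ j).isLt
  · rw [← permList_mul, mul_inv_cancel, permList_one]
  · rw [← permList_mul, inv_mul_cancel, permList_one]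

theorem IsPermPair.exists_perm {p : List ℕ × List ℕ} (h : IsPermPair m p) :
    ∃ σ : Perm (Fin m), permList σ = p.1 ∧ permList σ⁻¹ = p.2 := by
  obtain ⟨a, b⟩ := p
  obtain ⟨ha, hb, hab, hba⟩ := h
  have hlen_a : a.length = m := by simpa [compList] using congrArg List.length hba
  have hlen_b : b.length = m := by simpa [compList] using congrArg List.length hab
  have hval : ∀ {l : List ℕ}, (∀ x ∈ l, x < m) → l.length = m → ∀ j : Fin m, l.getD j 0 < m :=
    fun hl hlen j => hl _ <| by
      rw [List.getD_eq_getElem _ _ (hlen ▸ j.isLt)]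
      exact List.getElem_mem _
  have hinv : ∀ {l l' : List ℕ}, compList l l' = List.range m → l'.length = m →
      ∀ j : Fin m, l.getD (l'.getD j 0) 0 = j := fun hll' hlen j => by
    rw [← getD_compList _ (hlen ▸ j.isLt), hll']
    simp
  let σ : Perm (Fin m) :=
    { toFun := fun j => ⟨a.getD j 0, hval ha hlen_a j⟩
      invFun := fun j => ⟨b.getD j 0, hval hb hlen_b j⟩
      left_inv := fun j => Fin.ext (hinv hba hlen_a j)
      right_inv := fun j => Fin.ext (hinv hab hlen_b j) }
  exact ⟨σ, permList_eq_iff.2 ⟨hlen_a, fun j => rfl⟩, permList_eq_iff.2 ⟨hlen_b, fun j => rfl⟩⟩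

end PermList

section Evaluation

variable {n m : ℕ}

def letterList (t : Fin n → List ℕ × List ℕ) (x : Fin n × Bool) : List ℕ :=
  bif x.2 then (t x.1).1 else (t x.1).2

def evalWord (m : ℕ) (t : Fin n → List ℕ × List ℕ) (w : List (Fin n × Bool)) : List ℕ :=
  w.foldr (fun x acc => compList (letterList t x) acc) (List.range m)

def permTable (φ : FreeGroup (Fin n) →* Perm (Fin m)) (i : Fin n) : List ℕ × List ℕ :=
  (permList (φ (of i)), permList (φ (of i))⁻¹)

theorem evalWord_permTable (φ : FreeGroup (Fin n) →* Perm (Fin m)) (w : List (Fin n × Bool)) :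
    evalWord m (permTable φ) w = permList (φ (mk w)) := by
  induction w with
  | nil => rw [evalWord, List.foldr_nil, ← one_eq_mk, _root_.map_one, permList_one]
  | cons x w ih =>
    rw [evalWord, List.foldr_cons, ← evalWord, ih, ← List.singleton_append, ← mul_mk,
      _root_.map_mul, permList_mul]
    obtain ⟨i, _ | _⟩ := x
    · have hinv : mk [(i, false)] = (of i)⁻¹ := by simp [of, inv_mk, invRev]
      rw [hinv, _root_.map_inv]
      rfl
    · rfl

end Evaluation

section Certificate

variable {n : ℕ}

-- `(m, t)` with `t i` tabulating the images in `Sym(m)` of the generator `i` and of its inverse.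
def IsNontrivialityCert (R : List (List (Fin n × Bool))) (w : List (Fin n × Bool))
    (c : ℕ × (Fin n → List ℕ × List ℕ)) : Prop :=
  (∀ i, IsPermPair c.1 (c.2 i)) ∧ (∀ r ∈ R, evalWord c.1 c.2 r = List.range c.1) ∧
    evalWord c.1 c.2 w ≠ List.range c.1

theorem exists_isNontrivialityCert_iff (R : List (List (Fin n × Bool)))
    (w : List (Fin n × Bool)) :
    (∃ c, IsNontrivialityCert R w c) ↔ ∃ (m : ℕ) (φ : FreeGroup (Fin n) →* Perm (Fin m)),
      (∀ r ∈ R, φ (mk r) = 1) ∧ φ (mk w) ≠ 1 := by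
  constructor
  · rintro ⟨⟨m, t⟩, ht, hR, hw⟩
    choose σ hσ using fun i => (ht i).exists_perm
    have htable : permTable (lift σ) = t := funext fun i => by
      rw [permTable, lift_apply_of, (hσ i).1, (hσ i).2]
    refine ⟨m, lift σ, fun r hr => permList_injective ?_, fun h => hw ?_⟩
    · rw [← evalWord_permTable, htable, hR r hr, permList_one]
    · rw [← htable, evalWord_permTable, h, permList_one]
  · rintro ⟨m, φ, hR, hw⟩
    refine ⟨(m, permTable φ), fun i => isPermPair_permList _, fun r hr => ?_, fun h => hw ?_⟩
    · rw [evalWord_permTable, hR r hr, permList_one]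
    · rw [evalWord_permTable, ← permList_one] at h
      exact permList_injective h

end Certificate

section Primrec

open Primrec

variable {n : ℕ}

theorem primrec_compList : Primrec₂ compList :=
  (list_map snd ((list_getD 0).comp (fst.comp fst) snd).to₂).to₂

theorem primrecRel_isPermPair : PrimrecRel IsPermPair := by
  have hbound : PrimrecRel fun (m : ℕ) (l : List ℕ) => ∀ x ∈ l, x < m :=
    (PrimrecRel.forall_mem_list nat_lt).swap
  have hcomp : PrimrecRel fun (m : ℕ) (p : List ℕ × List ℕ) => compList p.1 p.2 = List.range m :=
    Primrec.eq.comp (primrec_compList.comp (fst.comp snd) (snd.comp snd)) (list_range.comp fst)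
  have hcomp' : PrimrecRel fun (m : ℕ) (p : List ℕ × List ℕ) => compList p.2 p.1 = List.range m :=
    Primrec.eq.comp (primrec_compList.comp (snd.comp snd) (fst.comp snd)) (list_range.comp fst)
  exact (hbound.comp fst (fst.comp snd)).and ((hbound.comp fst (snd.comp snd)).and
    (hcomp.and hcomp'))

theorem primrec_letterList : Primrec₂ (letterList (n := n)) :=
  have hrow := fin_app.comp fst (fst.comp snd)
  (Primrec.cond (snd.comp snd) (fst.comp hrow) (snd.comp hrow)).to₂

theorem primrec_evalWord :
    Primrec₂ fun (c : ℕ × (Fin n → List ℕ × List ℕ)) (w : List (Fin n × Bool)) =>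
      evalWord c.1 c.2 w :=
  list_foldr snd (list_range.comp (fst.comp fst))
    (primrec_compList.comp (primrec_letterList.comp (snd.comp (fst.comp fst)) (fst.comp snd))
      (snd.comp snd)).to₂

theorem primrecRel_isNontrivialityCert (R : List (List (Fin n × Bool))) :
    PrimrecRel (IsNontrivialityCert R) := by
  have hrow : PrimrecRel fun (i : Fin n) (c : ℕ × (Fin n → List ℕ × List ℕ)) =>
      IsPermPair c.1 (c.2 i) :=
    primrecRel_isPermPair.comp (fst.comp snd) (fin_app.comp (snd.comp snd) fst)
  have hperm : PrimrecPred fun c : ℕ × (Fin n → List ℕ × List ℕ) =>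
      ∀ i, IsPermPair c.1 (c.2 i) :=
    (hrow.forall_mem_list.comp (const (List.finRange n)) .id).of_eq fun c => by simp
  have hrel : PrimrecRel fun (w : List (Fin n × Bool)) (c : ℕ × (Fin n → List ℕ × List ℕ)) =>
      evalWord c.1 c.2 w = List.range c.1 :=
    Primrec.eq.comp (primrec_evalWord.comp snd fst) (list_range.comp (fst.comp snd))
  exact (hperm.comp snd).and ((hrel.forall_mem_list.comp (const R) snd).and
    hrel.not)

end Primrec

theorem wordElt_ne_one_of_map {α H : Type} [Group H] {R : List (List (α × Bool))}
    {w : List (α × Bool)} (φ : FreeGroup α →* H) (hR : ∀ r ∈ R, φ (mk r) = 1)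
    (hw : φ (mk w) ≠ 1) : wordElt R w ≠ 1 := by
  intro h
  have hker : Subgroup.normalClosure (relsOf R) ≤ φ.ker :=
    Subgroup.normalClosure_le_normal fun _ ⟨r, hr, hx⟩ => hx ▸ hR r hr
  exact hw (hker (PresentedGroup.mk_eq_one_iff.1 h))

theorem MonoidHom.exists_perm_fin_ne_one {G Q : Type*} [Group G] [Group Q] [Finite Q]
    (f : G →* Q) {g : G} (hg : f g ≠ 1) : ∃ (m : ℕ) (ψ : G →* Perm (Fin m)), ψ g ≠ 1 := by
  obtain ⟨m, ⟨e⟩⟩ := Finite.exists_equiv_fin Q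
  let cayley : Q →* Perm (Fin m) := e.permCongrHom.toMonoidHom.comp (MulAction.toPermHom Q Q)
  have hcayley : Function.Injective cayley :=
    e.permCongrHom.injective.comp MulAction.toPerm_injective
  exact ⟨m, cayley.comp f, fun h => hg ((injective_iff_map_eq_one cayley).1 hcayley _ h)⟩

theorem exists_perm_of_map_wordElt_ne_one {α Q : Type} [Group Q] [Finite Q]
    {R : List (List (α × Bool))} {w : List (α × Bool)} (f : PresentedGroup (relsOf R) →* Q)
    (hf : f (wordElt R w) ≠ 1) :
    ∃ (m : ℕ) (φ : FreeGroup α →* Perm (Fin m)), (∀ r ∈ R, φ (mk r) = 1) ∧ φ (mk w) ≠ 1 := by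
  obtain ⟨m, ψ, hψ⟩ := f.exists_perm_fin_ne_one hf
  refine ⟨m, ψ.comp (PresentedGroup.mk _), fun r hr => ?_, hψ⟩
  rw [MonoidHom.comp_apply, PresentedGroup.one_of_mem (rels := relsOf R) ⟨r, hr, rfl⟩,
    _root_.map_one]

/-- If the finitely presented group `PresentedGroup (relsOf R)` is residually finite, then
the word problem for this presentation is decidable. -/
theorem word_problem_solvable_of_residually_finite
    (n : ℕ) (R : List (List (Fin n × Bool)))
    (hres : ∀ g : PresentedGroup (relsOf R), g ≠ 1 →
      ∃ (Q : Type) (_ : Group Q) (_ : Finite Q) (f : PresentedGroup (relsOf R) →* Q),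
        f g ≠ 1) :
    ComputablePred fun w : List (Fin n × Bool) => wordElt R w = 1 := by
  refine ComputablePred.computable_iff_re_compl_re'.2 ⟨?_, ?_⟩
  · exact (primrecRel_mk_eq_mk.comp₂ ((primrec_consequenceWord R).comp .snd).to₂
      Primrec₂.left).exists_re.of_eq fun w => (wordElt_eq_one_iff_exists_consequenceWord R w).symm
  · refine (primrecRel_isNontrivialityCert R).exists_re.of_eq fun w => ?_
    rw [exists_isNontrivialityCert_iff]
    constructor
    · rintro ⟨m, φ, hR, hw⟩
      exact wordElt_ne_one_of_map φ hR hw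
    · intro hw
      obtain ⟨Q, _, _, f, hf⟩ := hres _ hw
      exact exists_perm_of_map_wordElt_ne_one f hf
end

section
/- Let n : ℕ and let R be a finite list of words in n generators, and let G be the finitely presented group PresentedGroup S, where S ⊆ FreeGroup (Fin n) is the set of elements determined by R. Then, with no further hypotheses on G, the membership predicate is recursively enumerable: the predicate on pairs (X, w), where X is a list of words and w is a word, asserting that the element of G represented by w lies in Subgroup.closure of the set of elements of G represented by the words in X, satisfies REPred. -/
/-!
Write `F` for the free group. The element represented by `w` lies in the subgroup generated by
the images of `X` iff `w` lies in the subgroup of `F` generated by `X` and all conjugates of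
relators (the kernel of `F → G` is their closure), i.e. iff `w` is a product of words
`X[i] ^ ±1` and `g * R[j] ^ ±1 * g⁻¹`. Such a product is described by a finite list of
witness letters, and equality in `F` is decided by comparing free reductions. Membership is
therefore the projection of a primitive recursive relation, hence recursively enumerable.
-/

open FreeGroup

theorem PresentedGroup.mk_mem_closure_image_iff {α : Type*} {rels T : Set (FreeGroup α)}
    {x : FreeGroup α} :
    PresentedGroup.mk rels x ∈ Subgroup.closure (PresentedGroup.mk rels '' T) ↔
      x ∈ Subgroup.closure (T ∪ Group.conjugatesOfSet rels) := by
  rw [← MonoidHom.map_closure, ← Subgroup.mem_comap, Subgroup.comap_map_eq,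
    show (PresentedGroup.mk rels).ker = Subgroup.normalClosure rels from QuotientGroup.ker_mk' _,
    Subgroup.normalClosure, ← Subgroup.closure_union]

theorem Subgroup.mem_closure_iff_exists_list_map_prod {G β : Type*} [Group G] {s : Set G}
    {f : β → G} (hf : ∀ b, f b ∈ closure s)
    (hs : ∀ x ∈ s, x ∈ Set.range f ∧ x⁻¹ ∈ Set.range f) {x : G} :
    x ∈ closure s ↔ ∃ L : List β, (L.map f).prod = x := by
  refine ⟨fun hx => ?_, ?_⟩
  · rw [← mem_toSubmonoid, closure_toSubmonoid] at hx
    obtain ⟨l, hl, rfl⟩ := Submonoid.exists_list_of_mem_closure hx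
    have hl_range : l ∈ Set.range (List.map f) := by
      rw [Set.range_list_map]
      intro y hy
      rcases hl y hy with h | h
      · exact (hs y h).1
      · simpa using (hs _ h).2
    obtain ⟨L, rfl⟩ := hl_range
    exact ⟨L, rfl⟩
  · rintro ⟨L, rfl⟩
    exact list_prod_mem (by simpa using fun b _ => hf b)

theorem FreeGroup.mk_flatten {α : Type*} (ws : List (List (α × Bool))) :
    mk ws.flatten = (ws.map mk).prod := by
  induction ws with
  | nil => rfl
  | cons w ws ih => rw [List.flatten_cons, ← mul_mk, ih, List.map_cons, List.prod_cons]

theorem List.getD_mem_or_eq_default {α : Type*} (l : List α) (i : ℕ) (d : α) :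
    l.getD i d ∈ l ∨ l.getD i d = d := by
  rcases lt_or_ge i l.length with h | h
  · exact .inl (getD_eq_getElem _ _ h ▸ getElem_mem h)
  · exact .inr (getD_eq_default _ _ h)

section Computability

variable {α : Type} [Primcodable α]

theorem Primrec.freeGroup_invRev : Primrec (invRev : List (α × Bool) → List (α × Bool)) :=
  list_reverse.comp <| list_map .id
    (show Primrec₂ fun (_ : List (α × Bool)) (x : α × Bool) => (x.1, !x.2) from
      (fst.comp snd).pair (Primrec.not.comp (snd.comp snd)))

theorem Primrec.freeGroup_reduce [DecidableEq α] :
    Primrec (reduce : List (α × Bool) → List (α × Bool)) := by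
  have hcancel : PrimrecRel fun (x y : α × Bool) => x.1 = y.1 ∧ x.2 = !y.2 :=
    (Primrec.eq.comp (fst.comp fst) (fst.comp snd)).and
      (Primrec.eq.comp (snd.comp fst) (Primrec.not.comp (snd.comp snd)))
  have hstep : Primrec fun p : (α × Bool) × List (α × Bool) =>
      (List.casesOn p.2 [p.1] fun y t => if p.1.1 = y.1 ∧ p.1.2 = !y.2 then t else p.1 :: y :: t :
        List (α × Bool)) :=
    list_casesOn snd (list_cons.comp fst (const [])) <| to₂ <|
      ite (hcancel.comp (fst.comp fst) (fst.comp snd)) (snd.comp snd)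
        (list_cons.comp (fst.comp fst) (list_cons.comp (fst.comp snd) (snd.comp snd)))
  exact (list_rec .id (const [])
    (hstep.comp ((fst.comp snd).pair (snd.comp (snd.comp snd)))).to₂).of_eq fun L => rfl

theorem rePred_exists_of_computable₂ {β : Type} [Primcodable β] {f : α → β → Bool}
    (hf : Computable₂ f) : REPred fun a => ∃ b, f a b = true := by
  have hg : Computable₂ fun a k => ((Encodable.decode k : Option β).casesOn false (f a) : Bool) :=
    Computable.option_casesOn (Computable.decode.comp Computable.snd) (Computable.const false)
      (hf.comp (Computable.fst.comp Computable.fst) Computable.snd).to₂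
  refine (Partrec.rfind hg.partrec₂).dom_re.of_eq fun a => ?_
  simp only [Nat.rfind_dom']
  refine ⟨fun ⟨k, hk⟩ => ?_, fun ⟨b, hb⟩ => ⟨Encodable.encode b, by simpa [Encodable.encodek]⟩⟩
  rcases h : (Encodable.decode k : Option β) with _ | b
  · simp [h] at hk
  · exact ⟨b, by simpa [h] using hk⟩

end Computability

namespace MembershipProblem

variable {α : Type}

def signedWord (b : Bool) (u : List (α × Bool)) : List (α × Bool) :=
  bif b then u else invRev u

theorem mk_signedWord (b : Bool) (u : List (α × Bool)) :
    mk (signedWord b u) = bif b then mk u else (mk u)⁻¹ := by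
  cases b <;> simp [signedWord, inv_mk]

abbrev Witness (α : Type) := Bool × (ℕ ⊕ (List (α × Bool) × ℕ))

/-- `(b, inl i)` spells `X[i] ^ ±1` and `(b, inr (g, j))` spells `g * R[j] ^ ±1 * g⁻¹`, with
sign `+` iff `b`; an index out of range stands for the empty word. -/
def witnessWord (R X : List (List (α × Bool))) : Witness α → List (α × Bool)
  | (b, .inl i) => signedWord b (X.getD i [])
  | (b, .inr (g, j)) => g ++ signedWord b (R.getD j []) ++ invRev g

def gens (R X : List (List (α × Bool))) : Set (FreeGroup α) :=
  mk '' {u | u ∈ X} ∪ Group.conjugatesOfSet (relsOf R)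

section

variable (R X : List (List (α × Bool)))

theorem mk_witnessWord_inr (b : Bool) (g : List (α × Bool)) (j : ℕ) :
    mk (witnessWord R X (b, .inr (g, j))) =
      mk g * mk (signedWord b (R.getD j [])) * (mk g)⁻¹ := by
  rw [witnessWord, ← mul_mk, ← mul_mk, inv_mk]

theorem mk_witnessWord_mem_closure (t : Witness α) :
    mk (witnessWord R X t) ∈ Subgroup.closure (gens R X) := by
  obtain ⟨b, i | ⟨g, j⟩⟩ := t
  · have hX : mk (X.getD i []) ∈ Subgroup.closure (gens R X) := by
      rcases X.getD_mem_or_eq_default i [] with h | h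
      · exact Subgroup.subset_closure (.inl ⟨_, h, rfl⟩)
      · rw [h, ← one_eq_mk]; exact one_mem _
    rw [witnessWord, mk_signedWord]
    cases b
    · exact inv_mem hX
    · exact hX
  · have hR : mk (R.getD j []) ∈ Subgroup.normalClosure (relsOf R) := by
      rcases R.getD_mem_or_eq_default j [] with h | h
      · exact Subgroup.subset_normalClosure ⟨_, h, rfl⟩
      · rw [h, ← one_eq_mk]; exact one_mem _
    have hRb : mk (signedWord b (R.getD j [])) ∈ Subgroup.normalClosure (relsOf R) := by
      rw [mk_signedWord]
      cases b
      · exact inv_mem hR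
      · exact hR
    have hnormal : Subgroup.normalClosure (relsOf R) ≤ Subgroup.closure (gens R X) :=
      Subgroup.closure_mono Set.subset_union_right
    rw [mk_witnessWord_inr]
    exact hnormal (Subgroup.Normal.conj_mem inferInstance _ hRb _)

theorem mem_range_witnessWord {x : FreeGroup α} (hx : x ∈ gens R X) (b : Bool) :
    (bif b then x else x⁻¹) ∈ Set.range (mk ∘ witnessWord R X) := by
  rcases hx with ⟨u, hu, rfl⟩ | hx
  · obtain ⟨i, hi, rfl⟩ := List.getElem_of_mem hu
    exact ⟨(b, .inl i), by rw [Function.comp_apply, witnessWord, mk_signedWord,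
      List.getD_eq_getElem _ _ hi]⟩
  · obtain ⟨_, ⟨r, hr, rfl⟩, hconj⟩ := Group.mem_conjugatesOfSet_iff.mp hx
    obtain ⟨c, rfl⟩ := isConj_iff.mp hconj
    obtain ⟨g, rfl⟩ : ∃ g, mk g = c := Quot.exists_rep c
    obtain ⟨j, hj, rfl⟩ := List.getElem_of_mem hr
    refine ⟨(b, .inr (g, j)), ?_⟩
    rw [Function.comp_apply, mk_witnessWord_inr, mk_signedWord, List.getD_eq_getElem _ _ hj]
    cases b <;> simp

theorem mk_mem_closure_gens_iff [DecidableEq α] (w : List (α × Bool)) :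
    mk w ∈ Subgroup.closure (gens R X) ↔
      ∃ L : List (Witness α), reduce (L.map (witnessWord R X)).flatten = reduce w := by
  rw [Subgroup.mem_closure_iff_exists_list_map_prod (mk_witnessWord_mem_closure R X)
    fun x hx => ⟨mem_range_witnessWord R X hx true, mem_range_witnessWord R X hx false⟩]
  refine exists_congr fun L => ?_
  rw [show L.map (fun t => mk (witnessWord R X t)) = (L.map (witnessWord R X)).map mk from
    (List.map_map ..).symm, ← mk_flatten]
  exact ⟨reduce.sound, reduce.exact⟩

end

theorem primrec₂_witnessWord [Primcodable α] (R : List (List (α × Bool))) :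
    Primrec₂ (witnessWord R) := by
  have hsigned : Primrec₂ (signedWord : Bool → List (α × Bool) → List (α × Bool)) :=
    .cond .fst .snd (Primrec.freeGroup_invRev.comp .snd)
  have hgetD : Primrec₂ fun (l : List (List (α × Bool))) (i : ℕ) => l.getD i [] :=
    Primrec.list_getD []
  have hX : Primrec₂ fun (p : List (List (α × Bool)) × Witness α) (i : ℕ) =>
      signedWord p.2.1 (p.1.getD i []) :=
    hsigned.comp (Primrec.fst.comp (Primrec.snd.comp .fst))
      (hgetD.comp (Primrec.fst.comp .fst) .snd)
  have hR : Primrec₂ fun (p : List (List (α × Bool)) × Witness α) (gj : List (α × Bool) × ℕ) =>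
      gj.1 ++ signedWord p.2.1 (R.getD gj.2 []) ++ invRev gj.1 :=
    Primrec.list_append.comp
      (Primrec.list_append.comp (Primrec.fst.comp .snd)
        (hsigned.comp (Primrec.fst.comp (Primrec.snd.comp .fst))
          (hgetD.comp (.const R) (Primrec.snd.comp .snd))))
      (Primrec.freeGroup_invRev.comp (Primrec.fst.comp .snd))
  exact (Primrec.sumCasesOn (Primrec.snd.comp .snd) hX hR).of_eq fun ⟨X, b, d⟩ => by
    cases d <;> rfl

end MembershipProblem

open MembershipProblem in
theorem rePred_wordElt_mem_closure {α : Type} [Primcodable α] [DecidableEq α]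
    (R : List (List (α × Bool))) :
    REPred fun p : List (List (α × Bool)) × List (α × Bool) =>
      wordElt R p.2 ∈ Subgroup.closure {x | ∃ u ∈ p.1, x = wordElt R u} := by
  have hcheck : Computable₂ fun (p : List (List (α × Bool)) × List (α × Bool))
      (L : List (Witness α)) => decide (reduce (L.map (witnessWord R p.1)).flatten = reduce p.2) :=
    (Primrec.eq.comp
      (Primrec.freeGroup_reduce.comp <| Primrec.list_flatten.comp <| Primrec.list_map .snd <|
        ((primrec₂_witnessWord R).comp (Primrec.fst.comp (Primrec.fst.comp .fst)) .snd).to₂)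
      (Primrec.freeGroup_reduce.comp (Primrec.snd.comp .fst))).decide.to_comp
  refine (rePred_exists_of_computable₂ hcheck).of_eq fun ⟨X, w⟩ => ?_
  have hgens : {x | ∃ u ∈ X, x = wordElt R u} =
      PresentedGroup.mk (relsOf R) '' (mk '' {u | u ∈ X}) := by
    ext
    simp [wordElt, eq_comm]
  rw [hgens, wordElt, PresentedGroup.mk_mem_closure_image_iff, ← gens, mk_mem_closure_gens_iff]
  simp only [decide_eq_true_eq]

/-- The membership predicate for a finitely presented group is recursively enumerable. -/
theorem membership_problem_re (n : ℕ) (R : List (List (Fin n × Bool))) :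
    REPred fun p : List (List (Fin n × Bool)) × List (Fin n × Bool) =>
      wordElt R p.2 ∈ Subgroup.closure {x | ∃ u ∈ p.1, x = wordElt R u} :=
  rePred_wordElt_mem_closure R
end

section
/- Fix n, m : ℕ, let R be a finite list of words in n generators defining G = PresentedGroup S, and let R' be a finite list of words in m generators defining G' = PresentedGroup S'. Let u : Fin n → List (Fin m × Bool) be a family of words and let f : G →* G' be a group homomorphism sending, for each i, the image in G of the i-th generator to the element of G' represented by u i. Suppose f admits a left inverse, i.e. there is a homomorphism g : G' →* G with g (f x) = x for all x ∈ G. If the uniform membership problem for G' is decidable — i.e. ComputablePred holds for the predicate on pairs (Y, v) of a list of words and a word in m generators asserting that the element of G' represented by v lies in Subgroup.closure of the set of elements represented by Y — then the uniform membership problem for G is decidable in the same sense (for lists of words and words in n generators). -/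
/-! A retraction `g ∘ f = id` makes `f` injective, so `x ∈ ⟨S⟩ ↔ f x ∈ ⟨f S⟩`. On words, `f`
is realised by substituting the word `u i` for each generator `i`, a primitive recursive map,
and this many-one reduces the membership problem of `G` to that of `G'`. -/

section Substitution

variable {α β : Type*}

def substWord (u : α → List (β × Bool)) (w : List (α × Bool)) : List (β × Bool) :=
  w.flatMap fun q => cond q.2 (u q.1) (FreeGroup.invRev (u q.1))

theorem FreeGroup.mk_substWord (u : α → List (β × Bool)) (w : List (α × Bool)) :
    FreeGroup.mk (substWord u w) =
      FreeGroup.lift (fun a => FreeGroup.mk (u a)) (FreeGroup.mk w) := by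
  induction w with
  | nil => rfl
  | cons q w ih =>
    obtain ⟨a, _ | _⟩ := q <;>
      simp_all [substWord, FreeGroup.lift_mk, ← FreeGroup.mul_mk, FreeGroup.inv_mk]

theorem PresentedGroup.map_mk_eq_mk_substWord {rels : Set (FreeGroup α)}
    {rels' : Set (FreeGroup β)} (u : α → List (β × Bool))
    (f : PresentedGroup rels →* PresentedGroup rels')
    (hf : ∀ a, f (PresentedGroup.of a) = PresentedGroup.mk rels' (FreeGroup.mk (u a)))
    (w : List (α × Bool)) :
    f (PresentedGroup.mk rels (FreeGroup.mk w)) =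
      PresentedGroup.mk rels' (FreeGroup.mk (substWord u w)) := by
  rw [FreeGroup.mk_substWord]
  exact DFunLike.congr_fun (FreeGroup.ext_hom
    (f.comp (PresentedGroup.mk rels))
    ((PresentedGroup.mk rels').comp (FreeGroup.lift fun a => FreeGroup.mk (u a)))
    fun a => (hf a).trans (by simp)) _

theorem primrec_substWord [Primcodable α] [Finite α] [Primcodable β]
    (u : α → List (β × Bool)) :
    Primrec (substWord u) :=
  Primrec.list_flatMap Primrec.id
    ((Primrec.dom_finite fun q : α × Bool => cond q.2 (u q.1) (FreeGroup.invRev (u q.1))).comp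
      Primrec.snd).to₂

end Substitution

theorem Subgroup.mem_closure_image_iff {G N : Type*} [Group G] [Group N] {f : G →* N}
    (hf : Function.Injective f) {s : Set G} {x : G} :
    f x ∈ closure (f '' s) ↔ x ∈ closure s := by
  rw [← MonoidHom.map_closure, mem_map_iff_mem hf]

def UniformMembership {α : Type} (R : List (List (α × Bool)))
    (p : List (List (α × Bool)) × List (α × Bool)) : Prop :=
  wordElt R p.2 ∈ Subgroup.closure {x | ∃ v ∈ p.1, x = wordElt R v}

theorem uniformMembership_manyOneReducible {α β : Type} [Primcodable α] [Finite α]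
    [Primcodable β] {R : List (List (α × Bool))} {R' : List (List (β × Bool))}
    (u : α → List (β × Bool)) (f : PresentedGroup (relsOf R) →* PresentedGroup (relsOf R'))
    (hf : ∀ a, f (PresentedGroup.of a) = wordElt R' (u a)) (hinj : Function.Injective f) :
    UniformMembership R ≤₀ UniformMembership R' := by
  have hsubst (w : List (α × Bool)) : f (wordElt R w) = wordElt R' (substWord u w) :=
    PresentedGroup.map_mk_eq_mk_substWord u f hf w
  refine ⟨fun p => (p.1.map (substWord u), substWord u p.2), ?_, fun p => ?_⟩
  · have hprim := primrec_substWord u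
    exact (Primrec.pair (Primrec.list_map Primrec.fst (hprim.comp Primrec.snd).to₂)
      (hprim.comp Primrec.snd)).to_comp
  · have himage : f '' {x | ∃ v ∈ p.1, x = wordElt R v} =
        {x | ∃ v ∈ p.1.map (substWord u), x = wordElt R' v} := by
      ext; simp [hsubst, eq_comm]
    simp only [UniformMembership, ← Subgroup.mem_closure_image_iff hinj, himage, hsubst]

/-- If `G` embeds in `G'` as a retract (via an explicitly given homomorphism on
generators) and the uniform membership problem for `G'` is decidable, then the uniform
membership problem for `G` is decidable. -/
theorem membership_problem_of_retract (n m : ℕ)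
    (R : List (List (Fin n × Bool))) (R' : List (List (Fin m × Bool)))
    (u : Fin n → List (Fin m × Bool))
    (f : PresentedGroup (relsOf R) →* PresentedGroup (relsOf R'))
    (hf : ∀ i : Fin n, f (PresentedGroup.of i) = wordElt R' (u i))
    (g : PresentedGroup (relsOf R') →* PresentedGroup (relsOf R))
    (hg : ∀ x, g (f x) = x)
    (hmp' : ComputablePred fun p : List (List (Fin m × Bool)) × List (Fin m × Bool) =>
      wordElt R' p.2 ∈ Subgroup.closure {x | ∃ v ∈ p.1, x = wordElt R' v}) :
    ComputablePred fun p : List (List (Fin n × Bool)) × List (Fin n × Bool) =>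
      wordElt R p.2 ∈ Subgroup.closure {x | ∃ v ∈ p.1, x = wordElt R v} :=
  ComputablePred.computable_of_manyOneReducible
    (uniformMembership_manyOneReducible u f hf (Function.LeftInverse.injective (g := g) hg)) hmp'
end

section
/- Let π be a group, let η : π →* Multiplicative ℤ be a group homomorphism, let G = η.ker, and let H be any subgroup of π. Then the double coset G·H = { x : π | ∃ a ∈ G, ∃ b ∈ H, x = a * b } is separable in π: for every g ∈ π with g ∉ G·H there exist a finite group Q and a group homomorphism f : π →* Q such that f g ∉ f '' (G·H). -/
theorem exists_zmod_sep (S : AddSubgroup ℤ) (k : ℤ) (hk : k ∉ S) :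
    ∃ n : ℕ, 0 < n ∧ (∀ s ∈ S, (n : ℤ) ∣ s) ∧ ¬ (n : ℤ) ∣ k := by
  obtain ⟨m, rfl⟩ := Int.subgroup_cyclic S
  rcases eq_or_ne m 0 with rfl | hm
  · refine ⟨k.natAbs + 1, Nat.succ_pos _, ?_, ?_⟩
    · intro s hs
      simp only [AddSubgroup.mem_closure_singleton] at hs
      obtain ⟨t, rfl⟩ := hs
      simp
    · intro hdvd
      have hk0 : k ≠ 0 := by
        rintro rfl
        exact hk (AddSubgroup.zero_mem _)
      have h := Int.natAbs_dvd_natAbs.mpr hdvd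
      simp only [Int.natAbs_natCast] at h
      have := Nat.le_of_dvd (Int.natAbs_pos.mpr hk0) h
      omega
  · refine ⟨m.natAbs, Int.natAbs_pos.mpr hm, ?_, ?_⟩
    · intro s hs
      simp only [AddSubgroup.mem_closure_singleton] at hs
      obtain ⟨t, rfl⟩ := hs
      rw [smul_eq_mul]
      exact Int.natAbs_dvd.mpr (⟨t, mul_comm t m⟩)
    · intro hdvd
      rw [Int.natAbs_dvd] at hdvd
      obtain ⟨t, rfl⟩ := hdvd
      exact hk (AddSubgroup.mem_closure_singleton.mpr ⟨t, by simp [smul_eq_mul, mul_comm]⟩)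

/-- If `G` is the kernel of a homomorphism `η : π →* Multiplicative ℤ` and `H` is any
subgroup of `π`, then the double coset `G · H` is separable in `π`. -/
theorem double_coset_separable_of_fibre (π : Type) [Group π]
    (η : π →* Multiplicative ℤ) (H : Subgroup π) (g : π)
    (hg : g ∉ {x : π | ∃ a ∈ η.ker, ∃ b ∈ H, x = a * b}) :
    ∃ (Q : Type) (_ : Group Q) (_ : Finite Q) (f : π →* Q),
      f g ∉ f '' {x : π | ∃ a ∈ η.ker, ∃ b ∈ H, x = a * b} := by
  set S : AddSubgroup ℤ := Subgroup.toAddSubgroup' (H.map η) with hS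
  set k : ℤ := Multiplicative.toAdd (η g) with hk
  have hkS : k ∉ S := by
    intro hmem
    have : η g ∈ H.map η := hmem
    obtain ⟨b, hb, hbg⟩ := this
    exact hg ⟨g * b⁻¹, by simp [MonoidHom.mem_ker, hbg], b, hb, by group⟩
  obtain ⟨n, hn, hdvd, hndvd⟩ := exists_zmod_sep S k hkS
  haveI : NeZero n := ⟨hn.ne'⟩
  refine ⟨Multiplicative (ZMod n), inferInstance, inferInstance,
    (AddMonoidHom.toMultiplicative (Int.castAddHom (ZMod n))).comp η, ?_⟩
  rintro ⟨x, ⟨a, ha, b, hb, rfl⟩, hx⟩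
  rw [MonoidHom.mem_ker] at ha
  have hxval : ((Multiplicative.toAdd (η (a * b)) : ℤ) : ZMod n) = (k : ZMod n) := by
    exact_mod_cast hx
  have hmem : (Multiplicative.toAdd (η (a * b)) : ℤ) ∈ S := by
    show η (a * b) ∈ H.map η
    rw [map_mul, ha, one_mul]
    exact ⟨b, hb, rfl⟩
  have h1 : ((Multiplicative.toAdd (η (a * b)) : ℤ) : ZMod n) = 0 :=
    (ZMod.intCast_zmod_eq_zero_iff_dvd _ _).mpr (hdvd _ hmem)
  have h2 : (k : ZMod n) ≠ 0 := fun h =>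
    hndvd ((ZMod.intCast_zmod_eq_zero_iff_dvd _ _).mp h)
  exact h2 (hxval ▸ h1)
end
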